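/- arXiv:1302.6183 — 8 statements merged into one kernel-verified Lean document; each statement's English description precedes it below -/
import Mathlib

section
/- A finite simple graph H on vertex set V is an exact-threshold graph if and only if H has a unit interval representation; that is, there exist integers r ≥ 1, t ≥ 0 and a map c : V → {1,...,r} ⊆ ℤ such that for all distinct u, v ∈ V, u and v are adjacent in H if and only if |c(u) − c(v)| ≤ t, precisely when there exists a map f : V → ℝ such that for all distinct u, v ∈ V, u and v are adjacent in H if and only if the closed intervals [f(u), f(u)+1] and [f(v), f(v)+1] have nonempty intersection. -/
/-!
Two unit intervals meet iff their left ends are at distance at most `1`. An exact-threshold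
colouring `c` with threshold `t` therefore becomes a unit interval representation after scaling
by `1 / (t + 1/2)`, since an integer `k` satisfies `|k| ≤ t` iff `|k| < t + 1/2`.

Conversely, since `V` is finite, the distances exceeding `1` exceed it by a uniform margin, so
for a large integer `N` they all satisfy `N + 2 ≤ N * d`. Rounding `N * f` down changes every
difference by less than `1`, which keeps the distances `≤ 1` at most `N` and pushes the others
above `N + 1`.
-/

lemma Set.Icc_inter_Icc_add_one_nonempty_iff (a b : ℝ) :
    (Set.Icc a (a + 1) ∩ Set.Icc b (b + 1)).Nonempty ↔ |a - b| ≤ 1 := by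
  rw [Set.Icc_inter_Icc, Set.nonempty_Icc, abs_sub_le_iff, max_le_iff, le_min_iff, le_min_iff]
  constructor
  · rintro ⟨⟨-, h₁⟩, h₂, -⟩
    constructor <;> linarith
  · rintro ⟨h₁, h₂⟩
    exact ⟨⟨by linarith, by linarith⟩, by linarith, by linarith⟩

lemma Int.abs_le_iff_abs_div_add_half_le_one (k t : ℤ) (ht : 0 ≤ t) :
    |k| ≤ t ↔ |(k : ℝ) / (t + 1 / 2)| ≤ 1 := by
  have hpos : (0 : ℝ) < t + 1 / 2 := by
    have : (0 : ℝ) ≤ t := by exact_mod_cast ht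
    linarith
  rw [abs_div, abs_of_pos hpos, div_le_one hpos, ← Int.cast_abs]
  constructor
  · intro h
    have : ((|k| : ℤ) : ℝ) ≤ t := by exact_mod_cast h
    linarith
  · intro h
    have : ((|k| : ℤ) : ℝ) < t + 1 := by linarith
    exact Int.lt_add_one_iff.mp (by exact_mod_cast this)

lemma Int.abs_floor_sub_floor_sub_lt_one (a b : ℝ) :
    |((⌊a⌋ - ⌊b⌋ : ℤ) : ℝ) - (a - b)| < 1 := by
  rw [abs_lt]
  push_cast
  constructor <;>
    linarith [Int.floor_le a, Int.floor_le b, Int.sub_one_lt_floor a, Int.sub_one_lt_floor b]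

lemma exists_nat_add_two_le_mul {ι : Type*} [Finite ι] (d : ι → ℝ) :
    ∃ N : ℕ, ∀ i, 1 < d i → (N : ℝ) + 2 ≤ N * d i := by
  suffices ∀ᶠ N : ℕ in Filter.atTop, ∀ i, 1 < d i → (N : ℝ) + 2 ≤ N * d i from this.exists
  refine Filter.eventually_all.mpr fun i => ?_
  filter_upwards [Filter.eventually_ge_atTop ⌈2 / (d i - 1)⌉₊] with N hN hi
  have hgap : 0 < d i - 1 := by linarith
  have : 2 / (d i - 1) ≤ N := Nat.ceil_le.mp hN
  rw [div_le_iff₀ hgap] at this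
  linarith

lemma Int.abs_le_iff_of_abs_sub_mul_lt_one {k : ℤ} {N : ℕ} {x : ℝ}
    (hk : |(k : ℝ) - N * x| < 1) (hgap : 1 < |x| → (N : ℝ) + 2 ≤ N * |x|) :
    |x| ≤ 1 ↔ |k| ≤ N := by
  have hNx : |(N : ℝ) * x| = N * |x| := by rw [abs_mul, Nat.abs_cast]
  have hupper := abs_sub_abs_le_abs_sub (k : ℝ) (N * x)
  have hlower := abs_sub_abs_le_abs_sub (N * x) (k : ℝ)
  rw [abs_sub_comm] at hlower
  constructor
  · intro hx
    have : ((|k| : ℤ) : ℝ) < N + 1 := by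
      rw [Int.cast_abs]
      nlinarith [Nat.cast_nonneg (α := ℝ) N]
    exact Int.lt_add_one_iff.mp (by exact_mod_cast this)
  · intro hkN
    by_contra hx
    have hx := hgap (not_le.mp hx)
    have : (N : ℝ) + 1 < ((|k| : ℤ) : ℝ) := by
      rw [Int.cast_abs]
      linarith
    have : (N : ℤ) + 1 < |k| := by exact_mod_cast this
    omega

lemma exists_int_abs_sub_le_iff_abs_sub_le_one {V : Type*} [Finite V] (f : V → ℝ) :
    ∃ (N : ℕ) (g : V → ℤ), ∀ u v, |f u - f v| ≤ 1 ↔ |g u - g v| ≤ N := by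
  obtain ⟨N, hN⟩ := exists_nat_add_two_le_mul fun p : V × V => |f p.1 - f p.2|
  refine ⟨N, fun v => ⌊N * f v⌋, fun u v => ?_⟩
  refine Int.abs_le_iff_of_abs_sub_mul_lt_one ?_ (hN (u, v))
  rw [mul_sub]
  exact Int.abs_floor_sub_floor_sub_lt_one _ _

lemma exists_sub_mem_Icc_one {V : Type*} [Finite V] (g : V → ℤ) :
    ∃ m r : ℤ, 1 ≤ r ∧ ∀ v, 1 ≤ g v - m ∧ g v - m ≤ r := by
  obtain ⟨lo, hlo⟩ := (Set.finite_range g).bddBelow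
  obtain ⟨hi, hhi⟩ := (Set.finite_range g).bddAbove
  refine ⟨lo - 1, max 1 (hi - lo + 1), le_max_left _ _, fun v => ?_⟩
  have := hlo (Set.mem_range_self v)
  have := hhi (Set.mem_range_self v)
  omega

/-- A finite simple graph `H` is an exact-threshold graph (there are integers `r ≥ 1`, `t ≥ 0`
and a coloring `c : V → {1,…,r} ⊆ ℤ` with `H.Adj u v ↔ |c u − c v| ≤ t` for distinct `u, v`)
if and only if `H` has a unit interval representation. -/
theorem stmt1 {V : Type*} [Fintype V] (H : SimpleGraph V) :
    (∃ (r t : ℤ), 1 ≤ r ∧ 0 ≤ t ∧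
      ∃ c : V → ℤ, (∀ v, 1 ≤ c v ∧ c v ≤ r) ∧
        ∀ u v : V, u ≠ v → (H.Adj u v ↔ |c u - c v| ≤ t)) ↔
    (∃ f : V → ℝ, ∀ u v : V, u ≠ v →
      (H.Adj u v ↔ (Set.Icc (f u) (f u + 1) ∩ Set.Icc (f v) (f v + 1)).Nonempty)) := by
  simp only [Set.Icc_inter_Icc_add_one_nonempty_iff]
  constructor
  · rintro ⟨-, t, -, ht, c, -, hc⟩
    refine ⟨fun v => c v / (t + 1 / 2), fun u v huv => ?_⟩
    rw [hc u v huv, ← sub_div, ← Int.cast_sub, Int.abs_le_iff_abs_div_add_half_le_one _ _ ht]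
  · rintro ⟨f, hf⟩
    obtain ⟨N, g, hg⟩ := exists_int_abs_sub_le_iff_abs_sub_le_one f
    obtain ⟨m, r, hr, hgm⟩ := exists_sub_mem_Icc_one g
    refine ⟨r, N, hr, by positivity, fun v => g v - m, hgm, fun u v huv => ?_⟩
    rw [hf u v huv, hg, sub_sub_sub_cancel_right]
end

section
/- Let G be a finite tree (a connected acyclic simple graph) on vertex set V. Then for every spanning subgraph H of G there exists a coloring c : V → {0,1} such that for every edge {u,v} of G: {u,v} is an edge of H if and only if c(u) = c(v). Hence every tree is (2,0)-total-threshold-colorable. -/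
/-!
Label each edge of `G` by `0` if it lies in `H` and by `1` otherwise. In a forest every
`ZMod 2` edge labelling is a coboundary: fix a root in each component and give `v` the sum of
the labels along the unique path from its root. The paths to two adjacent vertices differ by
exactly the edge between them, so the colours of its endpoints agree iff its label is `0`.
-/

namespace SimpleGraph

variable {V : Type*} {G : SimpleGraph V}

open Walk

theorem IsAcyclic.path_eq_concat_or {r u v : V} (hG : G.IsAcyclic) (h : G.Adj u v)
    {p : G.Walk r u} {q : G.Walk r v} (hp : p.IsPath) (hq : q.IsPath) :
    q = p.concat h ∨ p = q.concat h.symm := by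
  classical
  have unique {a b : V} {p q : G.Walk a b} (hp : p.IsPath) (hq : q.IsPath) : p = q :=
    congrArg Subtype.val ((hG.subsingleton_path a b).elim ⟨p, hp⟩ ⟨q, hq⟩)
  by_cases hv : v ∈ p.support
  · right
    have hd : p.dropUntil v hv = cons h.symm nil :=
      unique (hp.dropUntil hv) (by simp [cons_isPath_iff, h.ne'])
    rw [unique hq (hp.takeUntil hv), concat_eq_append, ← hd, take_spec]
  · left
    refine unique hq ?_
    rw [← isPath_reverse_iff, reverse_concat, cons_isPath_iff]
    exact ⟨hp.reverse, by simpa using hv⟩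

theorem IsAcyclic.sum_map_edges_add_sum_map_edges {r u v : V} (hG : G.IsAcyclic)
    (w : Sym2 V → ZMod 2) (h : G.Adj u v) {p : G.Walk r u} {q : G.Walk r v}
    (hp : p.IsPath) (hq : q.IsPath) :
    (p.edges.map w).sum + (q.edges.map w).sum = w s(u, v) := by
  rcases hG.path_eq_concat_or h hp hq with rfl | rfl
  · simp [edges_concat, ← add_assoc, CharTwo.add_self_eq_zero]
  · simp only [edges_concat, List.map_concat, List.sum_concat, Sym2.eq_swap]
    rw [add_right_comm, CharTwo.add_self_eq_zero, zero_add]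

theorem IsAcyclic.exists_add_eq (hG : G.IsAcyclic) (w : Sym2 V → ZMod 2) :
    ∃ c : V → ZMod 2, ∀ u v, G.Adj u v → c u + c v = w s(u, v) := by
  let root (v : V) : V := (G.connectedComponentMk v).out
  have root_eq {u v : V} (h : G.Adj u v) : root u = root v := by
    simp only [root, ConnectedComponent.connectedComponentMk_eq_of_adj h]
  choose P hP using fun v =>
    (ConnectedComponent.exact (Quot.out_eq _) : G.Reachable (root v) v).exists_isPath
  have sum_add_sum {a b u v : V} (e : a = b) {p : G.Walk a u} {q : G.Walk b v} (hp : p.IsPath)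
      (hq : q.IsPath) (h : G.Adj u v) :
      (p.edges.map w).sum + (q.edges.map w).sum = w s(u, v) := by
    subst e
    exact hG.sum_map_edges_add_sum_map_edges w h hp hq
  exact ⟨fun v => ((P v).edges.map w).sum, fun u v h => sum_add_sum (root_eq h) (hP u) (hP v) h⟩

end SimpleGraph

theorem stmt4_general {V : Type*} (G : SimpleGraph V) (hG : G.IsTree)
    (H : SimpleGraph V) :
    ∃ c : V → ℤ, (∀ v, c v = 0 ∨ c v = 1) ∧
      ∀ u v : V, G.Adj u v → (H.Adj u v ↔ c u = c v) := by
  classical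
  obtain ⟨c, hc⟩ := hG.isAcyclic.exists_add_eq fun e => if e ∈ H.edgeSet then 0 else 1
  refine ⟨fun v => (c v).val, fun v => ?_, fun u v h => ?_⟩
  · have := (c v).val_lt
    dsimp only
    omega
  · rw [Nat.cast_inj, (ZMod.val_injective 2).eq_iff, ← CharTwo.add_eq_zero, hc u v h]
    by_cases hadj : H.Adj u v <;> simp [hadj]

/-- Every finite tree `G` is `(2,0)`-total-threshold-colorable: for every spanning subgraph
`H ≤ G` there is a coloring `c : V → {0,1} ⊆ ℤ` such that an edge of `G` is an edge of `H`
iff its endpoints receive equal colors. -/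
theorem stmt4 {V : Type*} [Fintype V] (G : SimpleGraph V) (hG : G.IsTree)
    (H : SimpleGraph V) (hH : H ≤ G) :
    ∃ c : V → ℤ, (∀ v, c v = 0 ∨ c v = 1) ∧
      ∀ u v : V, G.Adj u v → (H.Adj u v ↔ c u = c v) :=
  stmt4_general G hG H
end

section
/- For every n ≥ 1, the fan graph Fₙ is (5,1)-total-threshold-colorable: for every spanning subgraph H of Fₙ there exists a coloring c : V(Fₙ) → {−2,−1,0,1,2} ⊆ ℤ such that for every edge {u,v} of Fₙ: {u,v} is an edge of H if and only if |c(u) − c(v)| ≤ 1. -/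
/-!
Colour the apex `0`. A path vertex gets `±1` if it is joined to the apex in `H` and `±2`
otherwise, so the apex edges are decided by the magnitudes alone. Two colours in `±{1, 2}`
differ by at most `1` exactly when they have the same sign, so it remains to choose the signs
along the path so that they flip precisely across the path edges missing from `H`.
-/

/-- The fan graph `Fₙ` on vertex set `{0,1,…,n}`: the apex `0` is adjacent to every other
vertex, and the vertices `1,…,n` form a path. -/
def fanGraph (n : ℕ) : SimpleGraph (Fin (n + 1)) where
  Adj u v := u ≠ v ∧ (u = 0 ∨ v = 0 ∨ u.val + 1 = v.val ∨ v.val + 1 = u.val)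
  symm := by
    constructor
    intro u v h
    refine ⟨h.1.symm, ?_⟩
    rcases h.2 with h | h | h | h
    · exact Or.inr (Or.inl h)
    · exact Or.inl h
    · exact Or.inr (Or.inr (Or.inr h))
    · exact Or.inr (Or.inr (Or.inl h))
  loopless := by
    constructor
    intro u h
    exact h.1 rfl

def flipSign (p : ℕ → Prop) [DecidablePred p] : ℕ → ℤˣ
  | 0 => 1
  | k + 1 => if p k then flipSign p k else -flipSign p k

theorem flipSign_succ_eq_iff (p : ℕ → Prop) [DecidablePred p] (k : ℕ) :
    flipSign p (k + 1) = flipSign p k ↔ p k := by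
  rw [flipSign]
  split_ifs with h
  · simp only [h]
  · simp only [h, neg_units_ne_self]

theorem abs_units_mul_le_two {s : ℤˣ} {a : ℤ} (ha : a = 1 ∨ a = 2) : |(s : ℤ) * a| ≤ 2 := by
  rcases Int.units_eq_one_or s with rfl | rfl <;> rcases ha with rfl | rfl <;> decide

theorem abs_units_mul_le_one_iff {s : ℤˣ} {a : ℤ} (ha : a = 1 ∨ a = 2) :
    |(s : ℤ) * a| ≤ 1 ↔ a = 1 := by
  rcases Int.units_eq_one_or s with rfl | rfl <;> rcases ha with rfl | rfl <;> decide

theorem abs_units_mul_sub_units_mul_le_one_iff {s t : ℤˣ} {a b : ℤ} (ha : a = 1 ∨ a = 2)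
    (hb : b = 1 ∨ b = 2) : |(s : ℤ) * a - t * b| ≤ 1 ↔ s = t := by
  rcases Int.units_eq_one_or s with rfl | rfl <;> rcases Int.units_eq_one_or t with rfl | rfl <;>
    rcases ha with rfl | rfl <;> rcases hb with rfl | rfl <;> decide

namespace FanColoring

variable {n : ℕ} (H : SimpleGraph (Fin (n + 1)))

def PathAdj (k : ℕ) : Prop :=
  ∃ u v : Fin (n + 1), u.val = k ∧ v.val = k + 1 ∧ H.Adj u v

open Classical in
noncomputable def magnitude (v : Fin (n + 1)) : ℤ :=
  if H.Adj 0 v then 1 else 2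

open Classical in
noncomputable def color (v : Fin (n + 1)) : ℤ :=
  if v = 0 then 0 else flipSign (PathAdj H) v.val * magnitude H v

theorem magnitude_eq_one_or_two (v : Fin (n + 1)) : magnitude H v = 1 ∨ magnitude H v = 2 := by
  unfold magnitude
  split_ifs <;> simp

theorem abs_color_le_two (v : Fin (n + 1)) : |color H v| ≤ 2 := by
  unfold color
  split_ifs
  · simp
  · exact abs_units_mul_le_two (magnitude_eq_one_or_two H v)

theorem adj_zero_iff {v : Fin (n + 1)} (hv : v ≠ 0) :
    H.Adj 0 v ↔ |color H 0 - color H v| ≤ 1 := by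
  unfold color
  rw [if_pos rfl, if_neg hv, zero_sub, abs_neg,
    abs_units_mul_le_one_iff (magnitude_eq_one_or_two H v), magnitude]
  split_ifs <;> simp [*]

theorem pathAdj_iff {u v : Fin (n + 1)} (huv : u.val + 1 = v.val) :
    PathAdj H u.val ↔ H.Adj u v := by
  constructor
  · rintro ⟨u', v', hu', hv', h⟩
    rwa [Fin.ext hu', Fin.ext (hv'.trans huv)] at h
  · exact fun h => ⟨u, v, rfl, huv.symm, h⟩

theorem adj_iff_of_succ {u v : Fin (n + 1)} (hu : u ≠ 0) (huv : u.val + 1 = v.val) :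
    H.Adj u v ↔ |color H u - color H v| ≤ 1 := by
  have hv : v ≠ 0 := fun h => by simp [h] at huv
  rw [color, color, if_neg hu, if_neg hv, ← huv,
    abs_units_mul_sub_units_mul_le_one_iff (magnitude_eq_one_or_two H u)
      (magnitude_eq_one_or_two H v),
    eq_comm, flipSign_succ_eq_iff, pathAdj_iff H huv]

theorem adj_iff_of_fanGraph_adj {u v : Fin (n + 1)} (h : (fanGraph n).Adj u v) :
    H.Adj u v ↔ |color H u - color H v| ≤ 1 := by
  have swap {x y : Fin (n + 1)} (h : H.Adj y x ↔ |color H y - color H x| ≤ 1) :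
      H.Adj x y ↔ |color H x - color H y| ≤ 1 := by
    rwa [H.adj_comm, abs_sub_comm]
  obtain ⟨hne, hu | hv | huv | hvu⟩ := h
  · subst hu
    exact adj_zero_iff H (Ne.symm hne)
  · subst hv
    exact swap (adj_zero_iff H hne)
  · by_cases hu : u = 0
    · subst hu
      exact adj_zero_iff H (Ne.symm hne)
    · exact adj_iff_of_succ H hu huv
  · by_cases hv : v = 0
    · subst hv
      exact swap (adj_zero_iff H hne)
    · exact swap (adj_iff_of_succ H hv hvu)

end FanColoring

theorem stmt6_general (n : ℕ) (H : SimpleGraph (Fin (n + 1))) :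
    ∃ c : Fin (n + 1) → ℤ, (∀ v, -2 ≤ c v ∧ c v ≤ 2) ∧
      ∀ u v : Fin (n + 1), (fanGraph n).Adj u v → (H.Adj u v ↔ |c u - c v| ≤ 1) :=
  ⟨FanColoring.color H, fun v => abs_le.mp (FanColoring.abs_color_le_two H v),
    fun _ _ => FanColoring.adj_iff_of_fanGraph_adj H⟩

/-- For every `n ≥ 1`, the fan `Fₙ` is `(5,1)`-total-threshold-colorable: every spanning
subgraph `H ≤ Fₙ` admits a coloring with colors in `{−2,−1,0,1,2} ⊆ ℤ` such that an edge
of `Fₙ` is an edge of `H` iff its endpoints' colors differ by at most `1`. -/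
theorem stmt6 (n : ℕ) (hn : 1 ≤ n) (H : SimpleGraph (Fin (n + 1))) (hH : H ≤ fanGraph n) :
    ∃ c : Fin (n + 1) → ℤ, (∀ v, -2 ≤ c v ∧ c v ≤ 2) ∧
      ∀ u v : Fin (n + 1), (fanGraph n).Adj u v → (H.Adj u v ↔ |c u - c v| ≤ 1) :=
  stmt6_general n H
end

section
/- For every integer t ≥ 0 there do not exist functions v, u : {0,1,2} → ℤ such that |v(i) − v(j)| > t for all i ≠ j and |u(i) − v(j)| ≤ t for all i ≠ j. (Hence the 6-vertex graph with vertices v₀,v₁,v₂,u₀,u₁,u₂, where each uᵢ is adjacent to v_{i+1} and v_{i+2} (indices mod 3) and the vᵢ are pairwise adjacent, with the edges among the vᵢ labeled far and all other edges labeled near, admits no threshold-coloring; this graph occurs in the triangular grid, so the triangular grid is not total-threshold-colorable.) -/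
/-! Each `u i` is within `t` of the two values `v j`, `j ≠ i`, so by the triangle inequality all
three values of `v` are pairwise at distance at most `2t`. But among three values that are pairwise
more than `t` apart, the two outer ones are more than `2t` apart, since their distance is the sum of
the distances to the middle one. -/

section

variable {α : Type*} [AddCommGroup α] [LinearOrder α] [IsOrderedAddMonoid α]

theorem abs_sub_le_add_of_abs_sub_le {t u a b : α} (ha : |u - a| ≤ t) (hb : |u - b| ≤ t) :
    |a - b| ≤ t + t :=
  calc |a - b| ≤ |a - u| + |u - b| := abs_sub_le a u b
    _ ≤ t + t := add_le_add (abs_sub_comm a u ▸ ha) hb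

theorem add_lt_abs_sub_of_le_of_le {t a b c : α} (hab : a ≤ b) (hbc : b ≤ c) (h₁ : t < |a - b|)
    (h₂ : t < |b - c|) : t + t < |a - c| := by
  rw [abs_sub_comm] at h₁ h₂ ⊢
  rw [abs_of_nonneg (sub_nonneg.2 hab)] at h₁
  rw [abs_of_nonneg (sub_nonneg.2 hbc)] at h₂
  rw [abs_of_nonneg (sub_nonneg.2 (hab.trans hbc))]
  calc t + t < (c - b) + (b - a) := add_lt_add h₂ h₁
    _ = c - a := sub_add_sub_cancel c b a

theorem add_lt_abs_sub_of_lt_abs_sub {t a b c : α} (hab : t < |a - b|) (hbc : t < |b - c|)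
    (hac : t < |a - c|) : t + t < |a - b| ∨ t + t < |b - c| ∨ t + t < |a - c| := by
  have hba : t < |b - a| := abs_sub_comm a b ▸ hab
  have hcb : t < |c - b| := abs_sub_comm b c ▸ hbc
  have hca : t < |c - a| := abs_sub_comm a c ▸ hac
  rcases le_total a b with h₁ | h₁ <;> rcases le_total b c with h₂ | h₂ <;>
    rcases le_total a c with h₃ | h₃
  all_goals first
    | exact .inr (.inr (add_lt_abs_sub_of_le_of_le h₁ h₂ hab hbc))
    | exact .inr (.inr (abs_sub_comm c a ▸ add_lt_abs_sub_of_le_of_le h₂ h₁ hcb hba))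
    | exact .inr (.inl (add_lt_abs_sub_of_le_of_le h₁ h₃ hba hac))
    | exact .inr (.inl (abs_sub_comm c b ▸ add_lt_abs_sub_of_le_of_le h₃ h₁ hca hab))
    | exact .inl (add_lt_abs_sub_of_le_of_le h₃ h₂ hac hcb)
    | exact .inl (abs_sub_comm b a ▸ add_lt_abs_sub_of_le_of_le h₂ h₃ hbc hca)

end

theorem stmt7_general (t : ℤ) :
    ¬ ∃ v u : Fin 3 → ℤ,
      (∀ i j : Fin 3, i ≠ j → t < |v i - v j|) ∧
      (∀ i j : Fin 3, i ≠ j → |u i - v j| ≤ t) := by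
  rintro ⟨v, u, hfar, hnear⟩
  have h₀₁ := abs_sub_le_add_of_abs_sub_le (hnear 2 0 (by decide)) (hnear 2 1 (by decide))
  have h₁₂ := abs_sub_le_add_of_abs_sub_le (hnear 0 1 (by decide)) (hnear 0 2 (by decide))
  have h₀₂ := abs_sub_le_add_of_abs_sub_le (hnear 1 0 (by decide)) (hnear 1 2 (by decide))
  rcases add_lt_abs_sub_of_lt_abs_sub (hfar 0 1 (by decide)) (hfar 1 2 (by decide))
    (hfar 0 2 (by decide)) with h | h | h <;> order

/-- For every integer threshold `t ≥ 0` there are no functions `v, u : {0,1,2} → ℤ` such that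
the values of `v` are pairwise far apart (`|v i − v j| > t` for `i ≠ j`) while `|u i − v j| ≤ t`
for all `i ≠ j`. This shows the triangular-grid configuration is not threshold-colorable. -/
theorem stmt7 (t : ℤ) (ht : 0 ≤ t) :
    ¬ ∃ v u : Fin 3 → ℤ,
      (∀ i j : Fin 3, i ≠ j → t < |v i - v j|) ∧
      (∀ i j : Fin 3, i ≠ j → |u i - v j| ≤ t) :=
  stmt7_general t
end

section
/- For every integer c₀ with 0 ≤ c₀ ≤ 7, all Booleans ℓ₁, ℓ₂, ℓ₃ (edge labels, true meaning near), and every k ∈ {1, 3, 4, 6}, there exist integers c₁, c₂ with 0 ≤ c₁ ≤ 7 and 0 ≤ c₂ ≤ 7 such that (|c₀ − c₁| ≤ 2 iff ℓ₁ = true), (|c₁ − c₂| ≤ 2 iff ℓ₂ = true), and (|c₂ − k| ≤ 2 iff ℓ₃ = true). (That is, on a path of length 3 with the color of one endpoint fixed to c₀, the colors 1, 3, 4 and 6 are all legal for the other endpoint, irrespective of the edge labels.) -/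
/-!
A colour `c ∈ {0,…,7}` has at least three colours at distance `≤ 2` and at least three at
distance `> 2`, so whatever `ℓ₁` is, at least three colours may follow `c₀` on the first edge.
On the other hand, for `k ∈ {1, 3, 4, 6}` and any `ℓ₂, ℓ₃`, at least six colours `c₁` can be
joined to `k` by a path `c₁ c₂ k` with labels `ℓ₂, ℓ₃`. Since `3 + 6 > 8`, the two sets meet.
-/

noncomputable abbrev palette : Finset ℤ := Finset.Icc 0 7

abbrev Compatible (ℓ : Bool) (a b : ℤ) : Prop := |a - b| ≤ 2 ↔ ℓ = true

noncomputable def legalStarts (ℓ₂ ℓ₃ : Bool) (k : ℤ) : Finset ℤ :=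
  palette.filter fun c₁ ↦ ∃ c₂ ∈ palette, Compatible ℓ₂ c₁ c₂ ∧ Compatible ℓ₃ c₂ k

lemma three_le_card_compatible (ℓ : Bool) {c : ℤ} (hc : c ∈ palette) :
    3 ≤ (palette.filter (Compatible ℓ c)).card := by
  obtain ⟨h0, h7⟩ := Finset.mem_Icc.mp hc
  cases ℓ <;> interval_cases c <;> decide

lemma six_le_card_legalStarts (ℓ₂ ℓ₃ : Bool) {k : ℤ} (hk : k = 1 ∨ k = 3 ∨ k = 4 ∨ k = 6) :
    6 ≤ (legalStarts ℓ₂ ℓ₃ k).card := by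
  rcases hk with rfl | rfl | rfl | rfl <;> cases ℓ₂ <;> cases ℓ₃ <;> decide

/-- On a path `v₀v₁v₂v₃` of length 3 with `c(v₀) = c₀ ∈ {0,…,7}` and any edge labels
(true = near, threshold 2), each of the colors `1, 3, 4, 6` is legal for `v₃`. -/
theorem stmt12 (c₀ : ℤ) (h0 : 0 ≤ c₀) (h7 : c₀ ≤ 7) (ℓ₁ ℓ₂ ℓ₃ : Bool)
    (k : ℤ) (hk : k = 1 ∨ k = 3 ∨ k = 4 ∨ k = 6) :
    ∃ c₁ c₂ : ℤ, 0 ≤ c₁ ∧ c₁ ≤ 7 ∧ 0 ≤ c₂ ∧ c₂ ≤ 7 ∧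
      (|c₀ - c₁| ≤ 2 ↔ ℓ₁ = true) ∧
      (|c₁ - c₂| ≤ 2 ↔ ℓ₂ = true) ∧
      (|c₂ - k| ≤ 2 ↔ ℓ₃ = true) := by
  have hc₀ : c₀ ∈ palette := Finset.mem_Icc.mpr ⟨h0, h7⟩
  obtain ⟨c₁, hc₁⟩ := Finset.inter_nonempty_of_card_lt_card_add_card
    (Finset.filter_subset _ _) (Finset.filter_subset _ _) <| calc
      palette.card = 8 := rfl
      _ < (palette.filter (Compatible ℓ₁ c₀)).card + (legalStarts ℓ₂ ℓ₃ k).card := by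
        linarith [three_le_card_compatible ℓ₁ hc₀, six_le_card_legalStarts ℓ₂ ℓ₃ hk]
  obtain ⟨hfirst, hrest⟩ := Finset.mem_inter.mp hc₁
  obtain ⟨hc₁, h₀₁⟩ := Finset.mem_filter.mp hfirst
  obtain ⟨-, c₂, hc₂, h₁₂, h₂k⟩ := Finset.mem_filter.mp hrest
  rw [Finset.mem_Icc] at hc₁ hc₂
  exact ⟨c₁, c₂, hc₁.1, hc₁.2, hc₂.1, hc₂.2, h₀₁, h₁₂, h₂k⟩
end

section
/- Consider the tree T that is a subdivision of K_{1,3} with center w and three prongs of lengths 1, 2 and 3: a 1-prong w–u with leaf u, a 2-prong w–a₁–a₂ with leaf a₂, and a 3-prong w–b₁–b₂–b₃ with leaf b₃. For every assignment of Boolean labels (true meaning near) to the six edges of T, every color assignment to the leaves with c(u) ∈ {1, 6} and c(a₂), c(b₃) ∈ {0,...,7}, there exist colors c(w), c(a₁), c(b₁), c(b₂) ∈ {0,...,7} such that for every edge {x,y} of T: the label of {x,y} is true if and only if |c(x) − c(y)| ≤ 2. -/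
/-!
Call a color *central* if it is one of `1, 3, 4, 6`. A 3-prong can be colored from any central
color of its center, whatever its labels and leaf color: the center colors it rules out are
always among `0, 2, 5, 7`. The colors `1, 3` are near `1` and far from `6`, the colors `4, 6` are
far from `1` and near `6`, and a 2-prong can always be served by one color of each of these
pairs; so the 1-prong and the 2-prong together admit a central color for `w`. Both facts are
finite checks.
-/

open Finset

def centralColors : Finset ℤ := {1, 3, 4, 6}

theorem centralColors_subset_Icc : centralColors ⊆ Icc 0 7 := by decide

theorem exists_central_coloring_of_short_prongs (cu : ℤ) (hcu : cu ∈ ({1, 6} : Finset ℤ))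
    (ℓu : Bool) (ca : ℤ) (hca : ca ∈ Icc 0 7) (ℓ₁ ℓ₂ : Bool) :
    ∃ c ∈ centralColors, (|c - cu| ≤ 2 ↔ ℓu = true) ∧
      ∃ x ∈ Icc 0 7, (|c - x| ≤ 2 ↔ ℓ₁ = true) ∧ (|x - ca| ≤ 2 ↔ ℓ₂ = true) := by
  revert cu ℓu ca ℓ₁ ℓ₂
  decide

theorem exists_three_prong_coloring_of_central (c : ℤ) (hc : c ∈ centralColors)
    (cb : ℤ) (hcb : cb ∈ Icc 0 7) (ℓ₁ ℓ₂ ℓ₃ : Bool) :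
    ∃ x ∈ Icc 0 7, ∃ y ∈ Icc 0 7,
      (|c - x| ≤ 2 ↔ ℓ₁ = true) ∧ (|x - y| ≤ 2 ↔ ℓ₂ = true) ∧ (|y - cb| ≤ 2 ↔ ℓ₃ = true) := by
  revert c cb ℓ₁ ℓ₂ ℓ₃
  decide

/-- Reducibility of the subdivision `T` of `K_{1,3}` with center `w` and prongs of lengths
`1, 2, 3` (`w–u`, `w–a₁–a₂`, `w–b₁–b₂–b₃`): for every Boolean labeling of the six edges
(true = near, threshold 2) and every coloring of the leaves with `c(u) ∈ {1,6}` and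
`c(a₂), c(b₃) ∈ {0,…,7}`, the coloring extends to all of `T`. -/
theorem stmt13 (ℓwu ℓwa₁ ℓa₁a₂ ℓwb₁ ℓb₁b₂ ℓb₂b₃ : Bool)
    (cu ca₂ cb₃ : ℤ)
    (hcu : cu = 1 ∨ cu = 6)
    (hca₂ : 0 ≤ ca₂ ∧ ca₂ ≤ 7) (hcb₃ : 0 ≤ cb₃ ∧ cb₃ ≤ 7) :
    ∃ cw ca₁ cb₁ cb₂ : ℤ,
      (0 ≤ cw ∧ cw ≤ 7) ∧ (0 ≤ ca₁ ∧ ca₁ ≤ 7) ∧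
      (0 ≤ cb₁ ∧ cb₁ ≤ 7) ∧ (0 ≤ cb₂ ∧ cb₂ ≤ 7) ∧
      (|cw - cu| ≤ 2 ↔ ℓwu = true) ∧
      (|cw - ca₁| ≤ 2 ↔ ℓwa₁ = true) ∧
      (|ca₁ - ca₂| ≤ 2 ↔ ℓa₁a₂ = true) ∧
      (|cw - cb₁| ≤ 2 ↔ ℓwb₁ = true) ∧
      (|cb₁ - cb₂| ≤ 2 ↔ ℓb₁b₂ = true) ∧
      (|cb₂ - cb₃| ≤ 2 ↔ ℓb₂b₃ = true) := by
  obtain ⟨cw, hcw, hwu, ca₁, hca₁, hwa₁, ha₁a₂⟩ :=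
    exists_central_coloring_of_short_prongs cu (by simpa using hcu) ℓwu ca₂ (mem_Icc.mpr hca₂)
      ℓwa₁ ℓa₁a₂
  obtain ⟨cb₁, hcb₁, cb₂, hcb₂, hwb₁, hb₁b₂, hb₂b₃⟩ :=
    exists_three_prong_coloring_of_central cw hcw cb₃ (mem_Icc.mpr hcb₃) ℓwb₁ ℓb₁b₂ ℓb₂b₃
  exact ⟨cw, ca₁, cb₁, cb₂, mem_Icc.mp (centralColors_subset_Icc hcw), mem_Icc.mp hca₁,
    mem_Icc.mp hcb₁, mem_Icc.mp hcb₂, hwu, hwa₁, ha₁a₂, hwb₁, hb₁b₂, hb₂b₃⟩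
end

section
/- Every path of length n ≥ 4 is a reducible configuration: for every n ≥ 4, all integers c₀, cₙ in {0,...,7} and all Booleans ℓ₁,...,ℓₙ (edge labels, true meaning near), there exist integers c₁,...,c_{n−1} in {0,...,7} such that for each i ∈ {1,...,n}: |c_{i−1} − c_i| ≤ 2 if and only if ℓ_i = true. -/
/-!
Call a color reachable from `a` in two steps along labels `ℓ₁, ℓ₂` if it is the end of a
two-edge path from `a` realizing them. A finite check shows that at least 5 of the 8 colors
are always reachable in two steps, so the two-step sets from the two ends of a path of length 4
meet, which colors its middle vertex. Longer paths reduce to length 4, since every color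
has both a near and a far color.
-/

open Finset

namespace PathReducible

def colors : Finset ℤ := (range 8).image (↑)

lemma mem_colors {x : ℤ} : x ∈ colors ↔ 0 ≤ x ∧ x ≤ 7 := by
  simp only [colors, mem_image, mem_range]
  constructor
  · rintro ⟨n, hn, rfl⟩
    omega
  · rintro ⟨h₀, h₇⟩
    exact ⟨x.toNat, by omega, by omega⟩

lemma card_colors : #colors = 8 := by decide

def SatisfiesLabel (l : Bool) (x y : ℤ) : Prop := |x - y| ≤ 2 ↔ l = true

instance (l : Bool) (x y : ℤ) : Decidable (SatisfiesLabel l x y) :=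
  inferInstanceAs (Decidable (_ ↔ _))

lemma satisfiesLabel_comm {l : Bool} {x y : ℤ} :
    SatisfiesLabel l x y ↔ SatisfiesLabel l y x := by
  rw [SatisfiesLabel, SatisfiesLabel, abs_sub_comm]

lemma exists_satisfiesLabel (l : Bool) {x : ℤ} (hx : x ∈ colors) :
    ∃ y ∈ colors, SatisfiesLabel l x y := by
  rw [mem_colors] at hx
  cases l
  · refine ⟨if x ≤ 3 then x + 4 else x - 4, ?_, ?_⟩ <;>
      split_ifs <;>
      simp only [mem_colors, SatisfiesLabel, abs_le, Bool.false_eq_true, iff_false] <;> omega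
  · exact ⟨x, mem_colors.2 hx, by simp [SatisfiesLabel]⟩

def labelNeighbors (l : Bool) (S : Finset ℤ) : Finset ℤ :=
  colors.filter fun y => ∃ x ∈ S, SatisfiesLabel l x y

lemma mem_labelNeighbors {l : Bool} {S : Finset ℤ} {y : ℤ} :
    y ∈ labelNeighbors l S ↔ y ∈ colors ∧ ∃ x ∈ S, SatisfiesLabel l x y :=
  mem_filter

lemma five_le_card_labelNeighbors_labelNeighbors :
    ∀ x ∈ colors, ∀ l₁ l₂ : Bool, 5 ≤ #(labelNeighbors l₂ (labelNeighbors l₁ {x})) := by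
  decide

lemma exists_path_four {a b : ℤ} (ha : a ∈ colors) (hb : b ∈ colors) (l₁ l₂ l₃ l₄ : Bool) :
    ∃ x₁ ∈ colors, ∃ x₂ ∈ colors, ∃ x₃ ∈ colors,
      SatisfiesLabel l₁ a x₁ ∧ SatisfiesLabel l₂ x₁ x₂ ∧
      SatisfiesLabel l₃ x₂ x₃ ∧ SatisfiesLabel l₄ x₃ b := by
  have hmeet : (labelNeighbors l₂ (labelNeighbors l₁ {a}) ∩
      labelNeighbors l₃ (labelNeighbors l₄ {b})).Nonempty :=
    inter_nonempty_of_card_lt_card_add_card (filter_subset _ _) (filter_subset _ _) <| by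
      have := five_le_card_labelNeighbors_labelNeighbors a ha l₁ l₂
      have := five_le_card_labelNeighbors_labelNeighbors b hb l₄ l₃
      rw [card_colors]
      omega
  obtain ⟨x₂, hx₂⟩ := hmeet
  obtain ⟨hx₂a, hx₂b⟩ := mem_inter.1 hx₂
  simp only [mem_labelNeighbors, mem_singleton, exists_eq_left] at hx₂a hx₂b
  obtain ⟨hx₂colors, x₁, ⟨hx₁, h₁⟩, h₂⟩ := hx₂a
  obtain ⟨-, x₃, ⟨hx₃, h₄⟩, h₃⟩ := hx₂b
  exact ⟨x₁, hx₁, x₂, hx₂colors, x₃, hx₃, h₁, h₂, satisfiesLabel_comm.1 h₃, satisfiesLabel_comm.1 h₄⟩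


def IsPathColoring {n : ℕ} (ℓ : Fin n → Bool) (c : Fin (n + 1) → ℤ) : Prop :=
  (∀ i, c i ∈ colors) ∧ ∀ i, SatisfiesLabel (ℓ i) (c i.castSucc) (c i.succ)

lemma isPathColoring_cons {n : ℕ} {ℓ : Fin (n + 1) → Bool} {a : ℤ} {c : Fin (n + 1) → ℤ}
    (ha : a ∈ colors) (h₀ : SatisfiesLabel (ℓ 0) a (c 0)) (hc : IsPathColoring (Fin.tail ℓ) c) :
    IsPathColoring ℓ (Fin.cons a c : Fin (n + 2) → ℤ) := by
  refine ⟨Fin.cases ha hc.1, Fin.cases h₀ fun i => ?_⟩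
  simpa [← Fin.succ_castSucc, Fin.tail] using hc.2 i

lemma exists_isPathColoring_four (ℓ : Fin 4 → Bool) {a b : ℤ} (ha : a ∈ colors)
    (hb : b ∈ colors) : ∃ c, c 0 = a ∧ c (Fin.last 4) = b ∧ IsPathColoring ℓ c := by
  obtain ⟨x₁, hx₁, x₂, hx₂, x₃, hx₃, h₁, h₂, h₃, h₄⟩ :=
    exists_path_four ha hb (ℓ 0) (ℓ 1) (ℓ 2) (ℓ 3)
  refine ⟨![a, x₁, x₂, x₃, b], rfl, rfl, ?_, ?_⟩
  · intro i
    fin_cases i <;> assumption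
  · intro i
    fin_cases i <;> assumption

theorem exists_isPathColoring {n : ℕ} (hn : 4 ≤ n) (ℓ : Fin n → Bool) {a b : ℤ}
    (ha : a ∈ colors) (hb : b ∈ colors) :
    ∃ c, c 0 = a ∧ c (Fin.last n) = b ∧ IsPathColoring ℓ c := by
  induction n, hn using Nat.le_induction generalizing a with
  | base => exact exists_isPathColoring_four ℓ ha hb
  | succ n _ ih =>
    obtain ⟨a', ha', h₀⟩ := exists_satisfiesLabel (ℓ 0) ha
    obtain ⟨c, hc₀, hcn, hc⟩ := ih (Fin.tail ℓ) ha'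
    refine ⟨Fin.cons a c, rfl, by simpa [← Fin.succ_last] using hcn, ?_⟩
    exact isPathColoring_cons ha (hc₀ ▸ h₀) hc

end PathReducible

/-- Every path of length `n ≥ 4` is a reducible configuration: for any endpoint colors
`a, b ∈ {0,…,7}` and any edge labels `ℓ₁,…,ℓₙ` (true = near, threshold 2), there is a
coloring `c` of all vertices of the path with colors in `{0,…,7}`, `c 0 = a`,
`c n = b`, realizing every edge label. -/
theorem stmt15 (n : ℕ) (hn : 4 ≤ n) (ℓ : Fin n → Bool)
    (a b : ℤ) (ha : 0 ≤ a ∧ a ≤ 7) (hb : 0 ≤ b ∧ b ≤ 7) :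
    ∃ c : Fin (n + 1) → ℤ,
      c 0 = a ∧ c (Fin.last n) = b ∧
      (∀ i, 0 ≤ c i ∧ c i ≤ 7) ∧
      ∀ i : Fin n, (|c i.castSucc - c i.succ| ≤ 2 ↔ ℓ i = true) := by
  obtain ⟨c, hc₀, hcn, hcolors, hlabels⟩ :=
    PathReducible.exists_isPathColoring hn ℓ (PathReducible.mem_colors.2 ha)
      (PathReducible.mem_colors.2 hb)
  exact ⟨c, hc₀, hcn, fun i => PathReducible.mem_colors.1 (hcolors i), hlabels⟩
end

section
/- Let T be the star with center v having one prong of length 1 and n prongs of length 3 (for any n ≥ 0). Then T is reducible: for every Boolean edge-labeling of T (true meaning near) and every assignment of colors in {0,...,7} to the leaves of T — namely a color a₀ for the leaf of the 1-prong and a color aᵢ for the leaf of the i-th 3-prong, for each i — there exist a color c(v) ∈ {0,...,7} and colors in {0,...,7} for the two internal vertices of each 3-prong such that every edge {x,y} of T labeled true satisfies |c(x) − c(y)| ≤ 2 and every edge labeled false satisfies |c(x) − c(y)| > 2. -/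
/-!
From a center colored `1`, `4` or `6`, every labelled 3-prong extends to every leaf color
(this fails for the centers `0, 2, 5, 7`), and for each color of the 1-prong leaf one of
`1, 4, 6` is near it and one is far from it. The prongs of a star interact only through the
center, so choosing such a center and extending each 3-prong independently colors the star.
-/

def Near (u v : Fin 8) : Prop := |(u : ℤ) - v| ≤ 2

instance : DecidableRel Near := fun u v => inferInstanceAs (Decidable (|(u : ℤ) - v| ≤ 2))

def ThreeProngExtends (c : Fin 8) : Prop :=
  ∀ (a : Fin 8) (ℓ₁ ℓ₂ ℓ₃ : Bool), ∃ x y : Fin 8,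
    (Near c x ↔ ℓ₁ = true) ∧ (Near x y ↔ ℓ₂ = true) ∧ (Near y a ↔ ℓ₃ = true)

theorem threeProngExtends_of_mem {c : Fin 8} (hc : c ∈ ({1, 4, 6} : Finset (Fin 8))) :
    ThreeProngExtends c := by
  unfold ThreeProngExtends
  revert c
  decide

theorem exists_mem_near_iff (a : Fin 8) (ℓ : Bool) :
    ∃ c ∈ ({1, 4, 6} : Finset (Fin 8)), (Near c a ↔ ℓ = true) := by
  revert a ℓ
  decide

theorem Fin.intCast_bounds {m : ℕ} (u : Fin (m + 1)) : 0 ≤ (u : ℤ) ∧ (u : ℤ) ≤ m := by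
  have := u.isLt
  omega

theorem Fin.exists_intCast_eq {m : ℕ} {z : ℤ} (hz : 0 ≤ z ∧ z ≤ m) :
    ∃ u : Fin (m + 1), (u : ℤ) = z :=
  ⟨⟨z.toNat, by omega⟩, by simp [hz.1]⟩

/-- The star with center `v`, one prong of length 1 (leaf colored `a₀`) and `n` prongs of
length 3 (the `i`-th with internal vertices `xᵢ, yᵢ`, leaf colored `a i`, and edge labels
`ℓ₁ i` on `v–xᵢ`, `ℓ₂ i` on `xᵢ–yᵢ`, `ℓ₃ i` on `yᵢ–leaf`; `ℓ₀` labels the 1-prong edge)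
is reducible (true = near, threshold 2, colors in `{0,…,7}`). -/
theorem stmt16 (n : ℕ) (ℓ₀ : Bool) (ℓ₁ ℓ₂ ℓ₃ : Fin n → Bool)
    (a₀ : ℤ) (ha₀ : 0 ≤ a₀ ∧ a₀ ≤ 7)
    (a : Fin n → ℤ) (ha : ∀ i, 0 ≤ a i ∧ a i ≤ 7) :
    ∃ (cv : ℤ) (x y : Fin n → ℤ),
      (0 ≤ cv ∧ cv ≤ 7) ∧
      (|cv - a₀| ≤ 2 ↔ ℓ₀ = true) ∧
      ∀ i : Fin n,
        (0 ≤ x i ∧ x i ≤ 7) ∧ (0 ≤ y i ∧ y i ≤ 7) ∧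
        (|cv - x i| ≤ 2 ↔ ℓ₁ i = true) ∧
        (|x i - y i| ≤ 2 ↔ ℓ₂ i = true) ∧
        (|y i - a i| ≤ 2 ↔ ℓ₃ i = true) := by
  obtain ⟨a₀, rfl⟩ := Fin.exists_intCast_eq (m := 7) ha₀
  choose a' ha' using fun i => Fin.exists_intCast_eq (m := 7) (ha i)
  obtain rfl : a = fun i => (a' i : ℤ) := funext fun i => (ha' i).symm
  obtain ⟨c, hc, hc₀⟩ := exists_mem_near_iff a₀ ℓ₀
  choose x y hxy using fun i => threeProngExtends_of_mem hc (a' i) (ℓ₁ i) (ℓ₂ i) (ℓ₃ i)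
  exact ⟨c, fun i => x i, fun i => y i, Fin.intCast_bounds c, hc₀,
    fun i => ⟨Fin.intCast_bounds (x i), Fin.intCast_bounds (y i), hxy i⟩⟩
end
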